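/- For a finite weighted digraph (G,m), the multiplicity of the eigenvalue 0 of the in Laplacian L^+ equals the number of sources of G, and the multiplicity of the eigenvalue 0 of the out Laplacian L^- equals the number of sinks of G. In particular, 0 is a simple eigenvalue of L^{+/ -} if and only if G has exactly one source/sink. -/

import Mathlib

open Finset Polynomial

variable {V A : Type*}

/-- Reachability by a directed path (`u ⇝ v`). -/
def Reaches (tail head : A → V) : V → V → Prop :=
  Relation.ReflTransGen (fun u v => ∃ a, tail a = u ∧ head a = v)

/-- A source: the vertex set of an SCC with no arcs entering it from its complement. -/
def IsSourceF (tail head : A → V) (F : Finset V) : Prop :=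
  F.Nonempty ∧ (∀ u ∈ F, ∀ v ∈ F, Reaches tail head u v) ∧
    (∀ u ∈ F, ∀ v, Reaches tail head u v → Reaches tail head v u → v ∈ F) ∧
    (∀ a, head a ∈ F → tail a ∈ F)

/-- A sink: the vertex set of an SCC with no arcs leaving it into its complement. -/
def IsSinkF (tail head : A → V) (S : Finset V) : Prop :=
  S.Nonempty ∧ (∀ u ∈ S, ∀ v ∈ S, Reaches tail head u v) ∧
    (∀ u ∈ S, ∀ v, Reaches tail head u v → Reaches tail head v u → v ∈ S) ∧
    (∀ a, tail a ∈ S → head a ∈ S)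

/-- The in Laplacian `L⁺ = (d⁺)* d` in its explicit form. -/
noncomputable def Lplus [Fintype A] [DecidableEq V] (tail head : A → V)
    (mV : V → ℝ) (mA : A → ℝ) (φ : V → ℂ) (v : V) : ℂ :=
  (mV v : ℂ)⁻¹ * ∑ a ∈ univ.filter (fun a => head a = v), (φ v - φ (tail a)) * (mA a : ℂ)

/-- The out Laplacian `L⁻ = (d⁻)* d` in its explicit form. -/
noncomputable def Lminus [Fintype A] [DecidableEq V] (tail head : A → V)
    (mV : V → ℝ) (mA : A → ℝ) (φ : V → ℂ) (v : V) : ℂ :=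
  (mV v : ℂ)⁻¹ * ∑ a ∈ univ.filter (fun a => tail a = v), (φ v - φ (head a)) * (mA a : ℂ)

/-- Matrix of `L⁺` in the coordinate basis. -/
noncomputable def Mplus [Fintype A] [DecidableEq V] (tail head : A → V)
    (mV : V → ℝ) (mA : A → ℝ) : Matrix V V ℂ :=
  fun v w => Lplus tail head mV mA (fun u => if u = w then 1 else 0) v

/-- Matrix of `L⁻` in the coordinate basis. -/
noncomputable def Mminus [Fintype A] [DecidableEq V] (tail head : A → V)
    (mV : V → ℝ) (mA : A → ℝ) : Matrix V V ℂ :=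
  fun v w => Lminus tail head mV mA (fun u => if u = w then 1 else 0) v

/-!
Functions killed by `L⁺` obey a maximum principle along arcs: a maximum over a set closed under
predecessors propagates to every vertex upstream of it. Hence such a function is constant on each
source, and it is determined by these constants because every vertex lies downstream of a source;
so `dim ker L⁺` is at most the number of sources. Conversely `L⁺ φ` is never a nonzero constant on
a source (at a maximum and at a minimum of `φ` on the source its inflow has opposite signs). This
makes the source indicators independent modulo `range L⁺`, which gives the reverse bound, and it
shows `ker (L⁺)² = ker L⁺`, so the algebraic multiplicity of `0` is `dim ker L⁺`. Finally `L⁻` is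
`L⁺` of the reversed digraph, whose sources are the sinks of `G`.
-/

section Reachability

variable {tail head : A → V}

theorem reaches_swap {u v : V} : Reaches head tail u v ↔ Reaches tail head v u := by
  have hswap : (fun u v => ∃ a, head a = u ∧ tail a = v) =
      Function.swap fun u v => ∃ a, tail a = u ∧ head a = v := by
    funext u v; simp only [Function.swap, and_comm]
  rw [Reaches, Reaches, hswap, Relation.reflTransGen_swap]

theorem isSinkF_iff_isSourceF_swap {S : Finset V} :
    IsSinkF tail head S ↔ IsSourceF head tail S := by
  simp only [IsSinkF, IsSourceF, reaches_swap]
  refine and_congr_right' <| and_congr ?_ <| and_congr_left' ?_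
  · exact ⟨fun h u hu v hv => h v hv u hu, fun h u hu v hv => h v hv u hu⟩
  · exact ⟨fun h u hu v h₁ h₂ => h u hu v h₂ h₁, fun h u hu v h₁ h₂ => h u hu v h₂ h₁⟩

theorem Reaches.mem_of_mem {U : Set V} (hU : ∀ a, head a ∈ U → tail a ∈ U) {u v : V}
    (h : Reaches tail head u v) (hv : v ∈ U) : u ∈ U := by
  induction h using Relation.ReflTransGen.head_induction_on with
  | refl => exact hv
  | head hstep _ ih => obtain ⟨a, rfl, rfl⟩ := hstep; exact hU a ih

theorem IsSourceF.eq_of_mem {F F' : Finset V} (hF : IsSourceF tail head F)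
    (hF' : IsSourceF tail head F') {v : V} (hv : v ∈ F) (hv' : v ∈ F') : F = F' := by
  ext w
  exact ⟨fun hw => hF'.2.2.1 v hv' w (hF.2.1 v hv w hw) (hF.2.1 w hw v hv),
    fun hw => hF.2.2.1 v hv w (hF'.2.1 v hv' w hw) (hF'.2.1 w hw v hv')⟩

variable [Fintype V]

theorem exists_isSourceF_mem {u : V} (hu : ∀ w, Reaches tail head w u → Reaches tail head u w) :
    ∃ F, IsSourceF tail head F ∧ u ∈ F := by
  classical
  refine ⟨univ.filter fun w => Reaches tail head w u ∧ Reaches tail head u w, ?_,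
    mem_filter.2 ⟨mem_univ u, .refl, .refl⟩⟩
  refine ⟨⟨u, mem_filter.2 ⟨mem_univ u, .refl, .refl⟩⟩, ?_⟩
  simp only [mem_filter, mem_univ, true_and]
  refine ⟨fun x hx y hy => hx.1.trans hy.2,
    fun x hx y hxy hyx => ⟨hyx.trans hx.1, hx.2.trans hxy⟩, fun a ha => ?_⟩
  have hau : Reaches tail head (tail a) u := (Relation.ReflTransGen.single ⟨a, rfl, rfl⟩).trans ha.1
  exact ⟨hau, hu _ hau⟩

/-- Upstream of `v`, a vertex `u` with the fewest ancestors is reached back by all of its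
ancestors, so its strongly connected component is a source. -/
theorem exists_isSourceF_reaches (v : V) :
    ∃ F, IsSourceF tail head F ∧ ∃ u ∈ F, Reaches tail head u v := by
  classical
  let anc : V → Finset V := fun w => univ.filter (Reaches tail head · w)
  have mem_anc {x w : V} : x ∈ anc w ↔ Reaches tail head x w := by simp [anc]
  obtain ⟨u, huv, hmin⟩ := (anc v).exists_min_image (fun w => (anc w).card) ⟨v, mem_anc.2 .refl⟩
  rw [mem_anc] at huv
  have hu : ∀ w, Reaches tail head w u → Reaches tail head u w := by
    intro w hwu
    have hsub : anc w ⊆ anc u := fun x hx => mem_anc.2 ((mem_anc.1 hx).trans hwu)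
    rw [← mem_anc, Finset.eq_of_subset_of_card_le hsub (hmin w (mem_anc.2 (hwu.trans huv)))]
    exact mem_anc.2 .refl
  obtain ⟨F, hF, huF⟩ := exists_isSourceF_mem hu
  exact ⟨F, hF, u, huF, huv⟩

end Reachability

section MaximumPrinciple

variable {K : Type*} [Field K] [Fintype A] [DecidableEq V] {tail head : A → V} {mA : A → K}

/-- `mV v * (L⁺ φ) v`: dropping the vertex weight leaves only signs of `φ v - φ u` to track. -/
def inFlow (tail head : A → V) (mA : A → K) (φ : V → K) (v : V) : K :=
  ∑ a ∈ univ.filter (fun a => head a = v), (φ v - φ (tail a)) * mA a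

theorem inFlow_neg (φ : V → K) (v : V) : inFlow tail head mA (-φ) v = -inFlow tail head mA φ v := by
  simp only [inFlow, ← sum_neg_distrib, Pi.neg_apply]
  exact sum_congr rfl fun _ _ => by ring

variable [LinearOrder K] [IsStrictOrderedRing K]

theorem inFlow_nonneg_of_le (hmA : ∀ a, 0 < mA a) {φ : V → K} {v : V}
    (h : ∀ a, head a = v → φ (tail a) ≤ φ v) : 0 ≤ inFlow tail head mA φ v :=
  sum_nonneg fun a ha =>
    mul_nonneg (sub_nonneg.2 (h a (mem_filter.1 ha).2)) (hmA a).le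

theorem eq_of_inFlow_eq_zero (hmA : ∀ a, 0 < mA a) {φ : V → K} {v : V}
    (h : ∀ a, head a = v → φ (tail a) ≤ φ v) (h0 : inFlow tail head mA φ v = 0)
    {a : A} (ha : head a = v) : φ (tail a) = φ v := by
  have hterm := (sum_eq_zero_iff_of_nonneg fun b hb =>
    mul_nonneg (sub_nonneg.2 (h b (mem_filter.1 hb).2)) (hmA b).le).1 h0 a (by simpa using ha)
  rcases mul_eq_zero.1 hterm with h' | h'
  · exact (sub_eq_zero.1 h').symm
  · exact absurd h' (hmA a).ne'

theorem Reaches.eq_of_isMaxOn (hmA : ∀ a, 0 < mA a) {φ : V → K} {U : Set V}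
    (hU : ∀ a, head a ∈ U → tail a ∈ U) (hharm : ∀ y ∈ U, inFlow tail head mA φ y = 0)
    {u v : V} (hv : v ∈ U) (hmax : IsMaxOn φ U v) (h : Reaches tail head u v) :
    φ u = φ v := by
  refine (h.mem_of_mem (U := {y | y ∈ U ∧ φ y = φ v}) ?_ ⟨hv, rfl⟩).2
  rintro a ⟨haU, ha⟩
  have hle : ∀ b, head b = head a → φ (tail b) ≤ φ (head a) := fun b hb =>
    ha ▸ isMaxOn_iff.1 hmax _ (hU b (hb ▸ haU))
  exact ⟨hU a haU, (eq_of_inFlow_eq_zero hmA hle (hharm _ haU) rfl).trans ha⟩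

theorem IsSourceF.eq_of_inFlow_eq_zero (hmA : ∀ a, 0 < mA a) {F : Finset V}
    (hF : IsSourceF tail head F) {φ : V → K} (hharm : ∀ v ∈ F, inFlow tail head mA φ v = 0)
    {u w : V} (hu : u ∈ F) (hw : w ∈ F) : φ u = φ w := by
  obtain ⟨v, hv, hmax⟩ := F.exists_max_image φ hF.1
  have hU : ∀ a, head a ∈ (F : Set V) → tail a ∈ (F : Set V) := hF.2.2.2
  rw [(hF.2.1 u hu v hv).eq_of_isMaxOn hmA hU hharm hv hmax,
    (hF.2.1 w hw v hv).eq_of_isMaxOn hmA hU hharm hv hmax]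

theorem IsSourceF.exists_inFlow_nonneg (hmA : ∀ a, 0 < mA a) {F : Finset V}
    (hF : IsSourceF tail head F) (φ : V → K) : ∃ v ∈ F, 0 ≤ inFlow tail head mA φ v := by
  obtain ⟨v, hv, hmax⟩ := F.exists_max_image φ hF.1
  exact ⟨v, hv, inFlow_nonneg_of_le hmA fun a ha => hmax _ (hF.2.2.2 a (ha ▸ hv))⟩

theorem IsSourceF.eq_zero_of_inFlow_eq_mul (hmA : ∀ a, 0 < mA a) {mV : V → K}
    (hmV : ∀ v, 0 < mV v) {F : Finset V} (hF : IsSourceF tail head F) {φ : V → K} {c : K}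
    (h : ∀ v ∈ F, inFlow tail head mA φ v = c * mV v) : c = 0 := by
  obtain ⟨v, hv, hv0⟩ := hF.exists_inFlow_nonneg hmA φ
  obtain ⟨w, hw, hw0⟩ := hF.exists_inFlow_nonneg hmA (-φ)
  rw [h v hv] at hv0
  rw [inFlow_neg, h w hw, neg_nonneg] at hw0
  exact le_antisymm (nonpos_of_mul_nonpos_left hw0 (hmV w)) (nonneg_of_mul_nonneg_left hv0 (hmV v))

variable [Fintype V]

theorem le_zero_of_inFlow_eq_zero (hmA : ∀ a, 0 < mA a) {φ : V → K}
    (hharm : ∀ v, inFlow tail head mA φ v = 0)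
    (h0 : ∀ F, IsSourceF tail head F → ∀ v ∈ F, φ v = 0) (v : V) : φ v ≤ 0 := by
  obtain ⟨w, -, hmax⟩ := univ.exists_max_image φ ⟨v, mem_univ v⟩
  obtain ⟨F, hF, u, hu, huw⟩ := exists_isSourceF_reaches (tail := tail) (head := head) w
  calc φ v ≤ φ w := hmax v (mem_univ v)
    _ = φ u := (huw.eq_of_isMaxOn hmA (U := Set.univ) (fun _ _ => trivial) (fun y _ => hharm y)
          trivial (fun y _ => hmax y (mem_univ y))).symm
    _ = 0 := h0 F hF u hu

theorem eq_zero_of_inFlow_eq_zero (hmA : ∀ a, 0 < mA a) {φ : V → K}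
    (hharm : ∀ v, inFlow tail head mA φ v = 0)
    (h0 : ∀ F, IsSourceF tail head F → ∀ v ∈ F, φ v = 0) : φ = 0 := by
  funext v
  refine le_antisymm (le_zero_of_inFlow_eq_zero hmA hharm h0 v) (neg_nonpos.1 ?_)
  exact le_zero_of_inFlow_eq_zero (φ := -φ) hmA (fun w => by rw [inFlow_neg, hharm, neg_zero])
    (fun F hF w hw => by rw [Pi.neg_apply, h0 F hF w hw, neg_zero]) v

end MaximumPrinciple

theorem Module.End.maxGenEigenspace_zero_eq_ker {R M : Type*} [CommRing R] [AddCommGroup M]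
    [Module R M] (f : Module.End R M) (h : ∀ x, f (f x) = 0 → f x = 0) :
    f.maxGenEigenspace 0 = LinearMap.ker f := by
  have hpow : ∀ k x, (f ^ (k + 1)) x = 0 → f x = 0 := by
    intro k
    induction k with
    | zero => simp
    | succ k ih => exact fun x hx => h x (ih (f x) (by rwa [pow_succ, Module.End.mul_apply] at hx))
  ext x
  simp only [Module.End.mem_maxGenEigenspace, zero_smul, sub_zero, LinearMap.mem_ker]
  refine ⟨fun ⟨k, hk⟩ => ?_, fun hx => ⟨1, by rwa [pow_one]⟩⟩
  cases k with
  | zero => simp_all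
  | succ k => exact hpow k x hk

section InLaplacian

variable {K : Type*} [Field K] [Fintype A] [DecidableEq V] {tail head : A → V}
  {mV : V → K} {mA : A → K}

def inLap (tail head : A → V) (mV : V → K) (mA : A → K) : Module.End K (V → K) where
  toFun φ v := (mV v)⁻¹ * inFlow tail head mA φ v
  map_add' φ ψ := by
    ext v
    simp only [inFlow, Pi.add_apply, ← mul_add, ← sum_add_distrib]
    exact congrArg _ (sum_congr rfl fun _ _ => by ring)
  map_smul' c φ := by
    ext v
    simp only [inFlow, Pi.smul_apply, smul_eq_mul, RingHom.id_apply, mul_sum]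
    exact sum_congr rfl fun _ _ => by ring

theorem inFlow_eq_mul_inLap (hmV : ∀ v, mV v ≠ 0) (φ : V → K) (v : V) :
    inFlow tail head mA φ v = mV v * inLap tail head mV mA φ v :=
  (mul_inv_cancel_left₀ (hmV v) _).symm

theorem inLap_eq_zero_iff (hmV : ∀ v, mV v ≠ 0) {φ : V → K} :
    inLap tail head mV mA φ = 0 ↔ ∀ v, inFlow tail head mA φ v = 0 := by
  simp only [funext_iff, inFlow_eq_mul_inLap hmV, Pi.zero_apply, mul_eq_zero, hmV, false_or]

variable [LinearOrder K] [IsStrictOrderedRing K] [Fintype V]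

theorem inLap_eq_zero_of_inLap_inLap_eq_zero (hmV : ∀ v, 0 < mV v) (hmA : ∀ a, 0 < mA a)
    {φ : V → K} (h : inLap tail head mV mA (inLap tail head mV mA φ) = 0) :
    inLap tail head mV mA φ = 0 := by
  have hmV' : ∀ v, mV v ≠ 0 := fun v => (hmV v).ne'
  have hψ := (inLap_eq_zero_iff hmV').1 h
  refine eq_zero_of_inFlow_eq_zero hmA hψ fun F hF v hv => ?_
  refine hF.eq_zero_of_inFlow_eq_mul hmA hmV (φ := φ) fun w hw => ?_
  rw [inFlow_eq_mul_inLap hmV', hF.eq_of_inFlow_eq_zero hmA (fun u _ => hψ u) hw hv, mul_comm]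

theorem finrank_ker_inLap_le (hmV : ∀ v, 0 < mV v) (hmA : ∀ a, 0 < mA a) :
    Module.finrank K (LinearMap.ker (inLap tail head mV mA)) ≤
      {F | IsSourceF tail head F}.ncard := by
  classical
  choose pick hpick using fun F : {F | IsSourceF tail head F} => F.2.1
  let ev := (LinearMap.pi fun F => LinearMap.proj (pick F)).comp
    (LinearMap.ker (inLap tail head mV mA)).subtype
  have hev : Function.Injective ev := by
    refine (injective_iff_map_eq_zero ev).2 fun φ hφ => Subtype.ext ?_
    have hharm := (inLap_eq_zero_iff fun v => (hmV v).ne').1 φ.2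
    refine eq_zero_of_inFlow_eq_zero hmA hharm fun F hF v hv => ?_
    rw [hF.eq_of_inFlow_eq_zero hmA (fun u _ => hharm u) hv (hpick ⟨F, hF⟩)]
    exact congrFun hφ ⟨F, hF⟩
  calc Module.finrank K (LinearMap.ker (inLap tail head mV mA))
      ≤ Module.finrank K ({F | IsSourceF tail head F} → K) :=
        LinearMap.finrank_le_finrank_of_injective hev
    _ = _ := by rw [Module.finrank_fintype_fun_eq_card, ← Nat.card_eq_fintype_card]; rfl

/-- The indicators of the sources are linearly independent modulo the range of `L⁺`, since
`L⁺ φ` cannot be a nonzero constant on a source. -/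
theorem ncard_le_finrank_ker_inLap (hmV : ∀ v, 0 < mV v) (hmA : ∀ a, 0 < mA a) :
    {F | IsSourceF tail head F}.ncard ≤
      Module.finrank K (LinearMap.ker (inLap tail head mV mA)) := by
  classical
  set f := inLap tail head mV mA
  let ind : {F | IsSourceF tail head F} → V → K := fun F v => if v ∈ F.1 then 1 else 0
  have hind : LinearIndependent K ((LinearMap.range f).mkQ ∘ ind) := by
    rw [Fintype.linearIndependent_iff]
    intro g hg F
    obtain ⟨φ, hφ⟩ : ∑ F, g F • ind F ∈ LinearMap.range f := by
      rw [← Submodule.ker_mkQ (LinearMap.range f), LinearMap.mem_ker, map_sum]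
      simpa only [map_smul, Function.comp_apply] using hg
    refine F.2.eq_zero_of_inFlow_eq_mul hmA hmV (φ := φ) fun v hv => ?_
    rw [inFlow_eq_mul_inLap (fun v => (hmV v).ne'), hφ, mul_comm, Finset.sum_apply,
      Finset.sum_eq_single F]
    · simp [ind, hv]
    · intro F' _ hne
      simp only [Pi.smul_apply, ind, smul_eq_mul, mul_ite, mul_one, mul_zero, ite_eq_right_iff]
      exact fun hv' => absurd (Subtype.ext (F'.2.eq_of_mem F.2 hv' hv)) hne
    · simp
  have h1 := hind.fintype_card_le_finrank
  have h2 := (LinearMap.range f).finrank_quotient_add_finrank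
  have h3 := f.finrank_range_add_finrank_ker
  rw [← Nat.card_eq_fintype_card] at h1
  change Nat.card _ ≤ _
  omega

theorem rootMultiplicity_charpoly_inLap (hmV : ∀ v, 0 < mV v) (hmA : ∀ a, 0 < mA a) :
    (inLap tail head mV mA).charpoly.rootMultiplicity 0 = {F | IsSourceF tail head F}.ncard := by
  rw [rootMultiplicity_eq_natTrailingDegree', ← LinearMap.finrank_maxGenEigenspace_zero_eq,
    Module.End.maxGenEigenspace_zero_eq_ker _
      fun _ => inLap_eq_zero_of_inLap_inLap_eq_zero hmV hmA]
  exact le_antisymm (finrank_ker_inLap_le hmV hmA) (ncard_le_finrank_ker_inLap hmV hmA)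

end InLaplacian

theorem Mplus_eq_map_toMatrix' [Fintype A] [Fintype V] [DecidableEq V] (tail head : A → V)
    (mV : V → ℝ) (mA : A → ℝ) :
    Mplus tail head mV mA = (LinearMap.toMatrix' (inLap tail head mV mA)).map (algebraMap ℝ ℂ) := by
  ext v w
  simp only [Mplus, Lplus, Matrix.map_apply, LinearMap.toMatrix'_apply, inLap, inFlow,
    Pi.single_apply, LinearMap.coe_mk, AddHom.coe_mk, Complex.coe_algebraMap]
  push_cast [apply_ite Complex.ofReal, Complex.ofReal_one, Complex.ofReal_zero]
  rfl

theorem rootMultiplicity_charpoly_Mplus [Fintype A] [Fintype V] [DecidableEq V]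
    {tail head : A → V} {mV : V → ℝ} {mA : A → ℝ} (hmV : ∀ v, 0 < mV v) (hmA : ∀ a, 0 < mA a) :
    (Mplus tail head mV mA).charpoly.rootMultiplicity 0 = {F | IsSourceF tail head F}.ncard := by
  rw [Mplus_eq_map_toMatrix', Matrix.charpoly_map, ← map_zero (algebraMap ℝ ℂ),
    ← eq_rootMultiplicity_map (algebraMap ℝ ℂ).injective, ← Matrix.charpoly_toLin',
    Matrix.toLin'_toMatrix', rootMultiplicity_charpoly_inLap hmV hmA]

/-- The algebraic multiplicity of the eigenvalue `0` of the in Laplacian `L⁺` equals the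
number of sources of `G`, and that of the out Laplacian `L⁻` equals the number of sinks;
in particular `0` is a simple eigenvalue of `L^±` iff `G` has exactly one source/sink. -/
theorem stmt_15 [Fintype V] [Fintype A] [DecidableEq V]
    (tail head : A → V) (mV : V → ℝ) (mA : A → ℝ)
    (hmV : ∀ v, 0 < mV v) (hmA : ∀ a, 0 < mA a) :
    ((Mplus tail head mV mA).charpoly.rootMultiplicity 0 =
        {F : Finset V | IsSourceF tail head F}.ncard) ∧
    ((Mminus tail head mV mA).charpoly.rootMultiplicity 0 =
        {S : Finset V | IsSinkF tail head S}.ncard) ∧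
    ((Mplus tail head mV mA).charpoly.rootMultiplicity 0 = 1 ↔
        ∃! F : Finset V, IsSourceF tail head F) ∧
    ((Mminus tail head mV mA).charpoly.rootMultiplicity 0 = 1 ↔
        ∃! S : Finset V, IsSinkF tail head S) := by
  have hplus := rootMultiplicity_charpoly_Mplus (tail := tail) (head := head) hmV hmA
  have hminus : (Mminus tail head mV mA).charpoly.rootMultiplicity 0 =
      {S : Finset V | IsSinkF tail head S}.ncard := by
    rw [show Mminus tail head mV mA = Mplus head tail mV mA from rfl]
    simpa only [isSinkF_iff_isSourceF_swap] using rootMultiplicity_charpoly_Mplus hmV hmA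
  rw [hplus, hminus]
  simp only [Set.ncard_eq_one, Set.singleton_iff_unique_mem, Set.mem_ofPred_eq, and_self]
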